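/- arXiv:1207.2125 — 7 statements merged into one kernel-verified Lean document; each statement's English description precedes it below -/
import Mathlib

section
/- If after allocating any number of balls via the local search allocation process on a connected graph G, the load difference between any two adjacent vertices is at most 1. Formally, for every k ≥ 0, every vertex v, and every neighbor u of v, |X_v^(k) - X_u^(k)| ≤ 1. -/
/-! Induction on the number of balls. A ball raises only the load of a vertex `w` that is
no larger than any neighbour's, so along an edge at `w` the difference can grow from at most
`0` to at most `1`; all other edges are untouched. -/

lemma abs_succ_sub_le_one {a b : ℕ} (hab : a ≤ b) (h : |(a : ℤ) - b| ≤ 1) :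
    |((a + 1 : ℕ) : ℤ) - b| ≤ 1 := by
  rw [abs_le] at h ⊢
  push_cast
  omega

namespace SimpleGraph

variable {V : Type*} (G : SimpleGraph V)

def IsSmoothLoad (f : V → ℕ) : Prop :=
  ∀ v u, G.Adj v u → |(f v : ℤ) - f u| ≤ 1

theorem isSmoothLoad_const (c : ℕ) : G.IsSmoothLoad fun _ => c := by
  intro v u _
  simp

theorem IsSmoothLoad.add_single [DecidableEq V] {f : V → ℕ} (hf : G.IsSmoothLoad f) {w : V}
    (hw : ∀ u, G.Adj w u → f w ≤ f u) : G.IsSmoothLoad (f + Pi.single w 1) := by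
  intro v u hadj
  simp only [Pi.add_apply, Pi.single_apply]
  by_cases hvw : v = w
  · subst hvw
    rw [if_pos rfl, if_neg (G.ne_of_adj hadj).symm, add_zero]
    exact abs_succ_sub_le_one (hw u hadj) (hf v u hadj)
  by_cases huw : u = w
  · subst huw
    rw [if_pos rfl, if_neg hvw, add_zero, abs_sub_comm]
    exact abs_succ_sub_le_one (hw v hadj.symm) (hf u v hadj.symm)
  · rw [if_neg hvw, if_neg huw, add_zero, add_zero]
    exact hf v u hadj

end SimpleGraph

theorem smoothness_of_local_search_general {V : Type*} [DecidableEq V] (G : SimpleGraph V)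
    (X : ℕ → V → ℕ) (p : ℕ → V)
    (h0 : ∀ v, X 0 v = 0)
    (hmin : ∀ k u, G.Adj (p k) u → X k (p k) ≤ X k u)
    (hstep : ∀ k v, X (k + 1) v = X k v + (if v = p k then 1 else 0)) :
    ∀ k v u, G.Adj v u → |(X k v : ℤ) - (X k u : ℤ)| ≤ 1 := by
  suffices ∀ k, G.IsSmoothLoad (X k) from this
  intro k
  induction k with
  | zero =>
    rw [show X 0 = fun _ => 0 from funext h0]
    exact G.isSmoothLoad_const 0
  | succ k ih =>
    have hX : X (k + 1) = X k + Pi.single (p k) 1 := by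
      funext v
      rw [hstep, Pi.add_apply, Pi.single_apply]
    rw [hX]
    exact ih.add_single G (hmin k)

/-- **Smoothness of local search allocation.**
If balls are allocated one by one, each ball being placed on a vertex `p k` that is a
local minimum of the current load vector (no neighbor has strictly smaller load), then
at every time `k` the loads of any two adjacent vertices differ by at most `1`. -/
theorem smoothness_of_local_search {V : Type*} [DecidableEq V] (G : SimpleGraph V)
    (hconn : G.Connected)
    (X : ℕ → V → ℕ) (p : ℕ → V)
    (h0 : ∀ v, X 0 v = 0)
    (hmin : ∀ k u, G.Adj (p k) u → X k (p k) ≤ X k u)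
    (hstep : ∀ k v, X (k + 1) v = X k v + (if v = p k then 1 else 0)) :
    ∀ k v u, G.Adj v u → |(X k v : ℤ) - (X k u : ℤ)| ≤ 1 :=
  smoothness_of_local_search_general G X p h0 hmin hstep
end

section
/- Suppose a vertex v of a graph G, an integer r ≥ 1, and a positive number Ψ satisfy: the total number of balls allocated to vertices within distance r of v is at most Ψ·|B_v^r|, where B_v^r is the ball of radius r around v. Then, assuming the loads satisfy the smoothness property (adjacent loads differ by at most 1), the load of v satisfies X_v^(n) ≤ Ψ + Σ_{i=0}^{r} i·|N_v^i| / |B_v^r|, where N_v^i is the set of vertices at graph distance exactly i from v. -/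
open Finset
open scoped Classical

/-
Smoothness makes the load 1-Lipschitz for the graph distance, so `X v ≤ X u + d(v, u)` for
every `u`. Averaging over the ball `B_v^r` gives `X v ≤ (Σ_{u ∈ B} X u + Σ_{u ∈ B} d(v, u)) / |B|`;
the first sum is at most `Ψ·|B|`, and grouping the second by distance gives `Σ_{i ≤ r} i·|N_v^i|`.
-/

namespace SimpleGraph

variable {V : Type*} {G : SimpleGraph V} {f : V → ℤ}

theorem Walk.le_add_length (hf : ∀ a b, G.Adj a b → |f a - f b| ≤ 1) {a b : V}
    (p : G.Walk a b) : f a ≤ f b + p.length := by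
  induction p with
  | nil => simp
  | cons hadj _ ih =>
    have := (abs_le.mp (hf _ _ hadj)).2
    rw [Walk.length_cons]
    omega

theorem Connected.le_add_dist (hG : G.Connected) (hf : ∀ a b, G.Adj a b → |f a - f b| ≤ 1)
    (a b : V) : f a ≤ f b + G.dist a b := by
  obtain ⟨p, hp⟩ := hG.exists_walk_length_eq_dist a b
  simpa [hp] using p.le_add_length hf

end SimpleGraph

theorem Finset.sum_filter_le_eq_sum_range_mul_card {α R : Type*} [NonAssocSemiring R]
    (s : Finset α) (g : α → ℕ) (r : ℕ) :
    ∑ u ∈ s.filter (fun u => g u ≤ r), (g u : R) =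
      ∑ i ∈ range (r + 1), (i : R) * (s.filter (fun u => g u = i)).card := by
  rw [← sum_fiberwise_of_maps_to (g := g) fun u hu =>
    mem_range_succ_iff.mpr (mem_filter.mp hu).2]
  refine sum_congr rfl fun i hi => ?_
  have hfiber : (s.filter fun u => g u ≤ r).filter (fun u => g u = i) =
      s.filter fun u => g u = i := by
    rw [filter_filter]
    refine filter_congr fun u _ => and_iff_right_of_imp fun hu => ?_
    exact hu ▸ mem_range_succ_iff.mp hi
  rw [hfiber, sum_congr rfl fun u hu => by rw [(mem_filter.mp hu).2], sum_const,
    nsmul_eq_mul']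

theorem load_upper_bound_from_ball_general {V : Type*} [Fintype V] (G : SimpleGraph V)
    (hconn : G.Connected) (X : V → ℕ) (v : V) (r : ℕ)
    (Ψ : ℝ)
    (hsmooth : ∀ a b, G.Adj a b → |(X a : ℤ) - (X b : ℤ)| ≤ 1)
    (hball : (∑ u ∈ univ.filter (fun u => G.dist v u ≤ r), (X u : ℝ))
      ≤ Ψ * (univ.filter (fun u => G.dist v u ≤ r)).card) :
    (X v : ℝ) ≤ Ψ +
      (∑ i ∈ Finset.range (r + 1),
        (i : ℝ) * (univ.filter (fun u => G.dist v u = i)).card)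
      / (univ.filter (fun u => G.dist v u ≤ r)).card := by
  set B := univ.filter (fun u => G.dist v u ≤ r)
  have hB : (0 : ℝ) < B.card :=
    Nat.cast_pos.mpr (card_pos.mpr ⟨v, by simp [B]⟩)
  have hlip (u : V) : (X v : ℝ) ≤ X u + G.dist v u := by
    exact_mod_cast hconn.le_add_dist (f := fun u => (X u : ℤ)) hsmooth v u
  have hsum : B.card * (X v : ℝ) ≤ ∑ u ∈ B, (X u : ℝ) + ∑ u ∈ B, (G.dist v u : ℝ) := by
    rw [← sum_add_distrib, ← nsmul_eq_mul, ← sum_const]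
    exact sum_le_sum fun u _ => hlip u
  rw [sum_filter_le_eq_sum_range_mul_card] at hsum
  rw [add_div' _ _ _ hB.ne', le_div_iff₀ hB]
  linarith

/-- **Upper bound on the load of a vertex from the smoothness property.**
If the total load on the ball `B_v^r` of radius `r` around `v` is at most `Ψ·|B_v^r|`,
and loads of adjacent vertices differ by at most one, then
`X v ≤ Ψ + (Σ_{i=0}^r i·|N_v^i|)/|B_v^r|`, where `N_v^i` is the sphere of radius `i`. -/
theorem load_upper_bound_from_ball {V : Type*} [Fintype V] (G : SimpleGraph V)
    (hconn : G.Connected) (X : V → ℕ) (v : V) (r : ℕ) (hr : 1 ≤ r)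
    (Ψ : ℝ) (hΨ : 0 < Ψ)
    (hsmooth : ∀ a b, G.Adj a b → |(X a : ℤ) - (X b : ℤ)| ≤ 1)
    (hball : (∑ u ∈ univ.filter (fun u => G.dist v u ≤ r), (X u : ℝ))
      ≤ Ψ * (univ.filter (fun u => G.dist v u ≤ r)).card) :
    (X v : ℝ) ≤ Ψ +
      (∑ i ∈ Finset.range (r + 1),
        (i : ℝ) * (univ.filter (fun u => G.dist v u = i)).card)
      / (univ.filter (fun u => G.dist v u ≤ r)).card :=
  load_upper_bound_from_ball_general G hconn X v r Ψ hsmooth hball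
end

section
/- (Lipschitz property) Consider the local search allocation with a fixed deterministic tie-breaking rule given by permutations {ξ_v} of the neighbors of each vertex v. Let X^(k) be the load vector after allocating k balls with birthplaces u_1,...,u_k, and Y^(k) the load vector after allocating k balls with birthplaces u_1,...,u_{i-1}, u_i', u_{i+1},...,u_k (only the i-th birthplace changed). Then Σ_{v ∈ V} |X_v^(k) − Y_v^(k)| ≤ 2. -/
/-!
Couple the two allocations from the `i`-th ball on: at every later time the load vectors are
`z + Pi.single a 1` and `z + Pi.single b 1` for some `z` with local minima at `a` and `b`.
Passing from the first vector to the second lowers the load at `a` and raises it at `b`, so a new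
ball takes the same local-search steps in both systems until the first walk steps to `b` or the
second to `a`; there it stops, since `b` is a local minimum of `z + Pi.single a 1` and vice versa.
In each of the three outcomes the invariant survives with a new `z`, and the two vectors differ
by at most `2` in `ℓ¹`.
-/
open Finset

variable {V : Type*} [Fintype V] [DecidableEq V]

/-- One step of the local search from `u` with current loads `x`:
among the neighbors of `u` (listed in the tie-breaking order `ξ u`) that have load
strictly smaller than `x u`, move to the first one of minimal load; if there is no
such neighbor, stay at `u` (i.e. `u` is a local minimum). -/
def lsNext (G : SimpleGraph V) [DecidableRel G.Adj] (ξ : V → List V)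
    (x : V → ℕ) (u : V) : V :=
  ((((ξ u).filter (fun w => decide (G.Adj u w ∧ x w < x u)))).argmin x).getD u

/-- Iterate the local search for at most `n` steps (stopping at a local minimum). -/
def lsIter (G : SimpleGraph V) [DecidableRel G.Adj] (ξ : V → List V)
    (x : V → ℕ) : ℕ → V → V
  | 0, u => u
  | n + 1, u => if lsNext G ξ x u = u then u else lsIter G ξ x n (lsNext G ξ x u)

/-- The vertex where a ball born at `u` is placed: since each local-search step strictly
decreases the load, `x u` steps always suffice to reach a local minimum. -/
def lsPlace (G : SimpleGraph V) [DecidableRel G.Adj] (ξ : V → List V)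
    (x : V → ℕ) (u : V) : V :=
  lsIter G ξ x (x u) u

/-- Add one ball born at `u` to the load vector `x`. -/
def lsAdd (G : SimpleGraph V) [DecidableRel G.Adj] (ξ : V → List V)
    (x : V → ℕ) (u : V) : V → ℕ :=
  fun v => x v + if v = lsPlace G ξ x u then 1 else 0

/-- The load vector after allocating the balls with birthplaces `bs` (in order) by
local search allocation with the deterministic tie-breaking rule `ξ`. -/
def lsLoads (G : SimpleGraph V) [DecidableRel G.Adj] (ξ : V → List V)
    (bs : List V) : V → ℕ :=
  bs.foldl (lsAdd G ξ) (fun _ => 0)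

namespace List

variable {α β : Type*} [DecidableEq α]

theorem idxOf_filter_le_idxOf_filter_iff {p : α → Bool} {m c : α} (hm : p m) (hc : p c)
    (l : List α) : (l.filter p).idxOf m ≤ (l.filter p).idxOf c ↔ l.idxOf m ≤ l.idxOf c := by
  induction l with
  | nil => simp
  | cons h t ih =>
    by_cases hp : p h
    · simp only [filter_cons_of_pos hp, idxOf_cons]
      grind
    · have hmh : h ≠ m := by rintro rfl; simp_all
      have hch : h ≠ c := by rintro rfl; simp_all
      simp [filter_cons_of_neg hp, idxOf_cons_ne _ hmh, idxOf_cons_ne _ hch, ih]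

theorem argmin_filter_eq_or [LinearOrder β] {f g : α → β} {p q : α → Bool} {a b : α}
    (l : List α) (hgf : ∀ n, n ≠ b → g n ≤ f n) (hfg : ∀ n, n ≠ a → f n ≤ g n)
    (hpq : ∀ n, n ≠ b → p n → q n) (hqp : ∀ n, n ≠ a → q n → p n) :
    (l.filter p).argmin f = some b ∨ (l.filter q).argmin g = some a ∨
      (l.filter p).argmin f = (l.filter q).argmin g := by
  have transfer_pq : ∀ n, n ≠ b → n ∈ l.filter p → n ∈ l.filter q := by
    simp only [mem_filter]; exact fun n hn h => ⟨h.1, hpq n hn h.2⟩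
  have transfer_qp : ∀ n, n ≠ a → n ∈ l.filter q → n ∈ l.filter p := by
    simp only [mem_filter]; exact fun n hn h => ⟨h.1, hqp n hn h.2⟩
  rcases hm : (l.filter p).argmin f with _ | m <;> rcases hc : (l.filter q).argmin g with _ | c
  · simp
  · by_cases hca : c = a
    · simp [hca]
    · exact absurd (argmin_eq_none.1 hm) (ne_nil_of_mem (transfer_qp c hca (argmin_mem hc)))
  · by_cases hmb : m = b
    · simp [hmb]
    · exact absurd (argmin_eq_none.1 hc) (ne_nil_of_mem (transfer_pq m hmb (argmin_mem hm)))
  by_cases hmb : m = b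
  · simp [hmb]
  by_cases hca : c = a
  · simp [hca]
  obtain ⟨hmp, hm_min, hm_first⟩ := argmin_eq_some_iff.1 hm
  obtain ⟨hcq, hc_min, hc_first⟩ := argmin_eq_some_iff.1 hc
  have hmq := transfer_pq m hmb hmp
  have hcp := transfer_qp c hca hcq
  have hfcm : f c ≤ f m := (hfg c hca).trans ((hc_min m hmq).trans (hgf m hmb))
  have hgmc : g m ≤ g c := (hgf m hmb).trans ((hm_min c hcp).trans (hfg c hca))
  have hmc : l.idxOf m ≤ l.idxOf c :=
    (idxOf_filter_le_idxOf_filter_iff (mem_filter.1 hmp).2 (mem_filter.1 hcp).2 l).1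
      (hm_first c hcp hfcm)
  have hcm : l.idxOf c ≤ l.idxOf m :=
    (idxOf_filter_le_idxOf_filter_iff (mem_filter.1 hcq).2 (mem_filter.1 hmq).2 l).1
      (hc_first m hmq hgmc)
  simp [(idxOf_inj (mem_filter.1 hmp).1).1 (le_antisymm hmc hcm)]

end List

def IsLocalMinLoad (G : SimpleGraph V) (x : V → ℕ) (v : V) : Prop :=
  ∀ n, G.Adj v n → x v ≤ x n

def LsCoupled (G : SimpleGraph V) (x y : V → ℕ) : Prop :=
  ∃ z a b, IsLocalMinLoad G z a ∧ IsLocalMinLoad G z b ∧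
    x = z + Pi.single a 1 ∧ y = z + Pi.single b 1

section LocalSearch

omit [Fintype V]

variable {G : SimpleGraph V}

theorem IsLocalMinLoad.add_single_of_ne {z : V → ℕ} {a p : V} (ha : IsLocalMinLoad G z a)
    (hpa : p ≠ a) : IsLocalMinLoad G (z + Pi.single p 1) a := by
  intro n hn
  have := ha n hn
  simp only [Pi.add_apply, Pi.single_apply, if_neg hpa.symm]
  omega

variable [DecidableRel G.Adj] {ξ : V → List V} {x : V → ℕ} {u : V}

omit [DecidableEq V] in
theorem adj_and_lt_of_lsNext_ne (h : lsNext G ξ x u ≠ u) :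
    G.Adj u (lsNext G ξ x u) ∧ x (lsNext G ξ x u) < x u := by
  unfold lsNext at h ⊢
  rcases hm : ((ξ u).filter fun w => decide (G.Adj u w ∧ x w < x u)).argmin x with _ | m
  · rw [hm] at h; exact absurd rfl h
  · simpa using (List.mem_filter.1 (List.argmin_mem hm)).2

omit [DecidableEq V] in
theorem lsNext_eq_self_iff (hξ : ∀ v w, G.Adj v w → w ∈ ξ v) :
    lsNext G ξ x u = u ↔ IsLocalMinLoad G x u := by
  refine ⟨fun h n hn => ?_, fun h => ?_⟩
  · by_contra! hlt
    have hmem : n ∈ (ξ u).filter fun w => decide (G.Adj u w ∧ x w < x u) :=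
      List.mem_filter.2 ⟨hξ u n hn, by simp [hn, hlt]⟩
    rcases hm : ((ξ u).filter fun w => decide (G.Adj u w ∧ x w < x u)).argmin x with _ | m
    · exact List.ne_nil_of_mem hmem (List.argmin_eq_none.1 hm)
    have hadj : G.Adj u m := (of_decide_eq_true (List.mem_filter.1 (List.argmin_mem hm)).2).1
    have hnext : lsNext G ξ x u = m := by unfold lsNext; rw [hm]; rfl
    exact hadj.ne (h.symm.trans hnext)
  · by_contra hne
    obtain ⟨hadj, hlt⟩ := adj_and_lt_of_lsNext_ne hne
    exact (h _ hadj).not_gt hlt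

omit [DecidableEq V] in
theorem lsNext_eq_self_of_eq_zero (hu : x u = 0) : lsNext G ξ x u = u := by
  by_contra hne
  have := (adj_and_lt_of_lsNext_ne hne).2
  omega

theorem lsIter_of_lsNext_eq_self (h : lsNext G ξ x u = u) (n : ℕ) : lsIter G ξ x n u = u := by
  cases n <;> simp [lsIter, h]

theorem lsIter_succ (n : ℕ) (u : V) :
    lsIter G ξ x (n + 1) u = lsIter G ξ x n (lsNext G ξ x u) := by
  by_cases h : lsNext G ξ x u = u
  · simp only [h, lsIter_of_lsNext_eq_self h]
  · simp [lsIter, h]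

theorem lsIter_congr_fuel (n m : ℕ) (u : V) (hn : x u ≤ n) (hm : x u ≤ m) :
    lsIter G ξ x n u = lsIter G ξ x m u := by
  induction n generalizing m u with
  | zero => simp [lsIter_of_lsNext_eq_self (lsNext_eq_self_of_eq_zero (Nat.le_zero.1 hn))]
  | succ n ih =>
    by_cases h : lsNext G ξ x u = u
    · simp [lsIter_of_lsNext_eq_self h]
    have hlt := (adj_and_lt_of_lsNext_ne h).2
    obtain ⟨m, rfl⟩ : ∃ m', m = m' + 1 := Nat.exists_eq_succ_of_ne_zero (by omega)
    rw [lsIter_succ, lsIter_succ, ih m _ (by omega) (by omega)]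

theorem lsPlace_lsNext : lsPlace G ξ x (lsNext G ξ x u) = lsPlace G ξ x u := by
  by_cases h : lsNext G ξ x u = u
  · rw [h]
  have hlt := (adj_and_lt_of_lsNext_ne h).2
  obtain ⟨k, hk⟩ : ∃ k, x u = k + 1 := Nat.exists_eq_succ_of_ne_zero (by omega)
  rw [lsPlace, lsPlace, hk, lsIter_succ]
  exact lsIter_congr_fuel _ _ _ le_rfl (by omega)

theorem lsPlace_of_lsNext_eq_self (h : lsNext G ξ x u = u) : lsPlace G ξ x u = u :=
  lsIter_of_lsNext_eq_self h _

theorem lsNext_lsIter (n : ℕ) (u : V) (hn : x u ≤ n) :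
    lsNext G ξ x (lsIter G ξ x n u) = lsIter G ξ x n u := by
  induction n generalizing u with
  | zero => exact lsNext_eq_self_of_eq_zero (Nat.le_zero.1 hn)
  | succ n ih =>
    by_cases h : lsNext G ξ x u = u
    · rwa [lsIter_of_lsNext_eq_self h]
    have := (adj_and_lt_of_lsNext_ne h).2
    rw [lsIter_succ]
    exact ih _ (by omega)

theorem isLocalMinLoad_lsPlace (hξ : ∀ v w, G.Adj v w → w ∈ ξ v) :
    IsLocalMinLoad G x (lsPlace G ξ x u) :=
  (lsNext_eq_self_iff hξ).1 (lsNext_lsIter _ _ le_rfl)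

variable {z : V → ℕ} {a b : V}

theorem lsNext_coupling (hξ : ∀ v w, G.Adj v w → w ∈ ξ v) (ha : IsLocalMinLoad G z a)
    (hb : IsLocalMinLoad G z b) (hab : a ≠ b) (w : V) :
    lsNext G ξ (z + Pi.single a 1) w = b ∨ lsNext G ξ (z + Pi.single b 1) w = a ∨
      lsNext G ξ (z + Pi.single a 1) w = lsNext G ξ (z + Pi.single b 1) w := by
  by_cases hwb : w = b
  · subst hwb
    exact .inl ((lsNext_eq_self_iff hξ).2 (hb.add_single_of_ne hab))
  by_cases hwa : w = a
  · subst hwa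
    exact .inr (.inl ((lsNext_eq_self_iff hξ).2 (ha.add_single_of_ne hab.symm)))
  set x : V → ℕ := z + Pi.single a 1 with hx
  set y : V → ℕ := z + Pi.single b 1 with hy
  have hyx (n : V) (hn : n ≠ b) : y n ≤ x n := by simp [hx, hy, Pi.single_apply, hn]
  have hxy (n : V) (hn : n ≠ a) : x n ≤ y n := by simp [hx, hy, Pi.single_apply, hn]
  have hw : x w = y w := le_antisymm (hxy w hwa) (hyx w hwb)
  rcases List.argmin_filter_eq_or (ξ w) hyx hxy
      (p := fun n => decide (G.Adj w n ∧ x n < x w))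
      (q := fun n => decide (G.Adj w n ∧ y n < y w))
      (fun n hn => by simpa [hw] using fun hadj hlt => ⟨hadj, (hyx n hn).trans_lt hlt⟩)
      (fun n hn => by simpa [← hw] using fun hadj hlt => ⟨hadj, (hxy n hn).trans_lt hlt⟩)
    with h | h | h <;> simp only [lsNext, h, Option.getD_some] <;> tauto

theorem lsPlace_coupling (hξ : ∀ v w, G.Adj v w → w ∈ ξ v) (ha : IsLocalMinLoad G z a)
    (hb : IsLocalMinLoad G z b) (u : V) :
    lsPlace G ξ (z + Pi.single a 1) u = b ∨ lsPlace G ξ (z + Pi.single b 1) u = a ∨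
      lsPlace G ξ (z + Pi.single a 1) u = lsPlace G ξ (z + Pi.single b 1) u := by
  rcases eq_or_ne a b with rfl | hab
  · exact .inr (.inr rfl)
  induction u using (measure (z + Pi.single a 1)).wf.induction with
  | _ u ih =>
  rcases lsNext_coupling hξ ha hb hab u with h | h | h
  · refine .inl ?_
    rw [← lsPlace_lsNext, h]
    exact lsPlace_of_lsNext_eq_self ((lsNext_eq_self_iff hξ).2 (hb.add_single_of_ne hab))
  · refine .inr (.inl ?_)
    rw [← lsPlace_lsNext, h]
    exact lsPlace_of_lsNext_eq_self ((lsNext_eq_self_iff hξ).2 (ha.add_single_of_ne hab.symm))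
  · by_cases hu : lsNext G ξ (z + Pi.single a 1) u = u
    · rw [lsPlace_of_lsNext_eq_self hu, lsPlace_of_lsNext_eq_self (h ▸ hu)]
      exact .inr (.inr rfl)
    · rw [← lsPlace_lsNext, ← lsPlace_lsNext (x := z + Pi.single b 1), ← h]
      exact ih _ (adj_and_lt_of_lsNext_ne hu).2

theorem lsAdd_eq_add_single : lsAdd G ξ x u = x + Pi.single (lsPlace G ξ x u) 1 := by
  ext v
  simp [lsAdd, Pi.single_apply]

theorem IsLocalMinLoad.add_single_lsPlace (hξ : ∀ v w, G.Adj v w → w ∈ ξ v)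
    (ha : IsLocalMinLoad G z a) (u : V) :
    IsLocalMinLoad G (z + Pi.single (lsPlace G ξ (z + Pi.single a 1) u) 1) a := by
  by_cases hp : lsPlace G ξ (z + Pi.single a 1) u = a
  · have := isLocalMinLoad_lsPlace hξ (x := z + Pi.single a 1) (u := u)
    rwa [hp] at this ⊢
  · exact ha.add_single_of_ne hp

theorem lsCoupled_lsAdd_lsAdd (hξ : ∀ v w, G.Adj v w → w ∈ ξ v) (u' : V) :
    LsCoupled G (lsAdd G ξ x u) (lsAdd G ξ x u') :=
  ⟨x, _, _, isLocalMinLoad_lsPlace hξ, isLocalMinLoad_lsPlace hξ, lsAdd_eq_add_single,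
    lsAdd_eq_add_single⟩

theorem LsCoupled.lsAdd_lsAdd (hξ : ∀ v w, G.Adj v w → w ∈ ξ v) {y : V → ℕ}
    (h : LsCoupled G x y) (u : V) : LsCoupled G (lsAdd G ξ x u) (lsAdd G ξ y u) := by
  obtain ⟨z, a, b, ha, hb, rfl, rfl⟩ := h
  simp only [lsAdd_eq_add_single]
  rcases lsPlace_coupling hξ ha hb u with hp | hq | hpq
  · refine ⟨z + Pi.single b 1, a, _, hp ▸ ha.add_single_lsPlace hξ u,
      isLocalMinLoad_lsPlace hξ, ?_, rfl⟩
    rw [hp, add_right_comm]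
  · refine ⟨z + Pi.single a 1, _, b, isLocalMinLoad_lsPlace hξ,
      hq ▸ hb.add_single_lsPlace hξ u, rfl, ?_⟩
    rw [hq, add_right_comm]
  · refine ⟨z + Pi.single (lsPlace G ξ (z + Pi.single a 1) u) 1, a, b,
      ha.add_single_lsPlace hξ u, hpq ▸ hb.add_single_lsPlace hξ u, add_right_comm _ _ _, ?_⟩
    rw [hpq, add_right_comm]

theorem LsCoupled.foldl_lsAdd (hξ : ∀ v w, G.Adj v w → w ∈ ξ v) {y : V → ℕ}
    (h : LsCoupled G x y) (l : List V) :
    LsCoupled G (l.foldl (lsAdd G ξ) x) (l.foldl (lsAdd G ξ) y) := by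
  induction l generalizing x y with
  | nil => exact h
  | cons u l ih => exact ih (h.lsAdd_lsAdd hξ u)

theorem lsCoupled_foldl_lsAdd_set (hξ : ∀ v w, G.Adj v w → w ∈ ξ v) (l : List V) {i : ℕ}
    (hi : i < l.length) (u' : V) :
    LsCoupled G (l.foldl (lsAdd G ξ) x) ((l.set i u').foldl (lsAdd G ξ) x) := by
  induction l generalizing x i with
  | nil => simp at hi
  | cons u l ih =>
    cases i with
    | zero => exact LsCoupled.foldl_lsAdd hξ (lsCoupled_lsAdd_lsAdd hξ u') l
    | succ i => exact ih (Nat.lt_of_succ_lt_succ hi)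

end LocalSearch

theorem sum_abs_sub_add_single_le_two (z : V → ℕ) (a b : V) :
    ∑ v, |((z + Pi.single a 1 : V → ℕ) v : ℤ) - (z + Pi.single b 1 : V → ℕ) v| ≤ 2 := by
  calc _
      ≤ ∑ v, ((Pi.single a 1 : V → ℤ) v + (Pi.single b 1 : V → ℤ) v) :=
        sum_le_sum fun v _ => by
          simp only [Pi.add_apply, Pi.single_apply]
          split_ifs <;> simp
    _ = 2 := by simp [sum_add_distrib]

/-- **Lipschitz property of local search allocation.**
With a fixed deterministic tie-breaking rule `ξ` (a permutation of the neighbors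
of each vertex), changing the birthplace of a single ball changes the resulting
load vector by at most `2` in `ℓ¹`-norm. -/
theorem lsLoads_lipschitz (G : SimpleGraph V) [DecidableRel G.Adj]
    (ξ : V → List V)
    (hξ : ∀ v, (ξ v).Nodup ∧ ∀ w, w ∈ ξ v ↔ G.Adj v w)
    (bs : List V) (i : ℕ) (hi : i < bs.length) (u' : V) :
    ∑ v, |(lsLoads G ξ bs v : ℤ) - (lsLoads G ξ (bs.set i u') v : ℤ)| ≤ 2 := by
  obtain ⟨z, a, b, -, -, hx, hy⟩ :=
    lsCoupled_foldl_lsAdd_set (fun v w hvw => ((hξ v).2 w).2 hvw) bs (x := fun _ => 0) hi u'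
  rw [lsLoads, lsLoads, hx, hy]
  exact sum_abs_sub_add_single_le_two z a b
end

section
/- (Grid lower bound from a heavy vertex) In the d-dimensional torus grid (d a constant), if some vertex u receives at least log n / log log n balls as birthplaces and the maximum load is β, then β·(2β+1)^d ≥ log n / log log n; hence β = Ω((log n / log log n)^{1/(d+1)}). -/
open Finset
open scoped Classical

/-- Cyclic distance on `{0,...,m-1}`: `min {|a−b|, m−|a−b|}`. -/
def cdist {m : ℕ} (a b : Fin m) : ℕ :=
  min ((a.1 + m - b.1) % m) ((b.1 + m - a.1) % m)

/-- The graph distance of the `d`-dimensional torus grid on `(Fin m)^d`: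
`dist(u,v) = Σ_i min{|u_i−v_i|, m−|u_i−v_i|}`. -/
def tdist {d m : ℕ} (u v : Fin d → Fin m) : ℕ :=
  ∑ i, cdist (u i) (v i)

/-!
Every ball born at `u` is placed in the torus ball of radius `β` around `u`, and each vertex
holds at most `β` balls, so the number of balls born at `u` is at most `β` times the size of
that ball. The torus ball lies in the product of the cyclic balls of radius `β` around the
coordinates of `u`, each of which has at most `2β + 1` points.
-/

def cyclicBall {m : ℕ} (a : Fin m) (r : ℕ) : Finset (Fin m) :=
  univ.filter fun b => cdist a b ≤ r

def torusBall {d m : ℕ} (u : Fin d → Fin m) (r : ℕ) : Finset (Fin d → Fin m) :=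
  univ.filter fun v => tdist u v ≤ r

theorem cdist_eq_min_val_sub {m : ℕ} (a b : Fin m) :
    cdist a b = min (a - b).val (b - a).val := by
  simp only [cdist, Fin.val_sub]
  congr 2 <;> omega

theorem card_cyclicBall_le {m : ℕ} (a : Fin m) (r : ℕ) : #(cyclicBall a r) ≤ 2 * r + 1 := by
  have : NeZero m := ⟨a.pos.ne'⟩
  -- The signed offset of `b` from `a` lies in `[-r, r]`; it is injective on the ball since
  -- `b = a` is always sent to `0` through the first branch.
  let offset (b : Fin m) : ℤ := if (b - a).val ≤ r then (b - a).val else -(a - b).val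
  have hmaps : Set.MapsTo offset (cyclicBall a r) (Icc (-r : ℤ) r) := by
    intro b hb
    simp only [cyclicBall, coe_filter, mem_univ, true_and, Set.mem_ofPred_eq,
      cdist_eq_min_val_sub, min_le_iff] at hb
    simp only [coe_Icc, Set.mem_Icc, offset]
    split_ifs <;> omega
  have hinj : Set.InjOn offset (cyclicBall a r) := by
    intro b _ c _ hbc
    simp only [offset] at hbc
    split_ifs at hbc with hb hc hc
    · exact sub_left_injective (Fin.ext (by omega) : b - a = c - a)
    · have hca : a - c = 0 := Fin.val_eq_zero_iff.1 (by omega)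
      simp [(sub_eq_zero.1 hca).symm] at hc
    · have hab : a - b = 0 := Fin.val_eq_zero_iff.1 (by omega)
      simp [(sub_eq_zero.1 hab).symm] at hb
    · exact sub_right_injective (Fin.ext (by omega) : a - b = a - c)
  have := card_le_card_of_injOn offset hmaps hinj
  rw [Int.card_Icc] at this
  omega

theorem card_torusBall_le {d m : ℕ} (u : Fin d → Fin m) (r : ℕ) :
    #(torusBall u r) ≤ (2 * r + 1) ^ d := by
  have hsub : torusBall u r ⊆ Fintype.piFinset fun i => cyclicBall (u i) r := by
    intro v hv
    simp only [torusBall, cyclicBall, mem_filter_univ, Fintype.mem_piFinset] at hv ⊢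
    exact fun i => (single_le_sum (fun j _ => Nat.zero_le _) (mem_univ i)).trans hv
  calc #(torusBall u r) ≤ ∏ i, #(cyclicBall (u i) r) :=
        (card_le_card hsub).trans_eq (Fintype.card_piFinset _)
    _ ≤ (2 * r + 1) ^ d := by
        simpa using prod_le_pow_card univ _ _ fun i _ => card_cyclicBall_le (u i) r

theorem torus_lower_bound_heavy_vertex_general (d m : ℕ) (n : ℕ)
    (N : ℕ) (birth place : Fin N → (Fin d → Fin m)) (β : ℕ)
    (hdist : ∀ i, tdist (birth i) (place i) ≤ β)
    (hload : ∀ v, (univ.filter (fun i => place i = v)).card ≤ β)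
    (u : Fin d → Fin m)
    (hheavy : Real.log n / Real.log (Real.log n) ≤
      ((univ.filter (fun i => birth i = u)).card : ℝ)) :
    Real.log n / Real.log (Real.log n) ≤ (β : ℝ) * (2 * β + 1) ^ d := by
  have hplace : ∀ i ∈ univ.filter (fun i => birth i = u), place i ∈ torusBall u β := by
    intro i hi
    simp only [mem_filter, mem_univ, true_and, torusBall] at hi ⊢
    exact hi ▸ hdist i
  have hfiber : ∀ v ∈ torusBall u β,
      #{i ∈ univ.filter (fun i => birth i = u) | place i = v} ≤ β :=
    fun v _ => (card_le_card (filter_subset_filter _ (filter_subset _ _))).trans (hload v)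
  have hcount : #(univ.filter (fun i => birth i = u)) ≤ β * (2 * β + 1) ^ d :=
    (card_le_mul_card_image_of_maps_to hplace β hfiber).trans
      (Nat.mul_le_mul_left β (card_torusBall_le u β))
  exact hheavy.trans (by exact_mod_cast hcount)

/-- **Grid lower bound from a heavy vertex.**
In the `d`-dimensional torus grid on `n = m^d` vertices, suppose `N` balls are
allocated so that every ball is placed within graph distance `β` of its birthplace
and every vertex holds at most `β` balls (`β` is the maximum load).  If some vertex
`u` receives at least `log n / log log n` balls as birthplaces, then
`β·(2β+1)^d ≥ log n / log log n`. -/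
theorem torus_lower_bound_heavy_vertex (d m : ℕ) (n : ℕ) (hn : n = m ^ d)
    (N : ℕ) (birth place : Fin N → (Fin d → Fin m)) (β : ℕ)
    (hdist : ∀ i, tdist (birth i) (place i) ≤ β)
    (hload : ∀ v, (univ.filter (fun i => place i = v)).card ≤ β)
    (u : Fin d → Fin m)
    (hheavy : Real.log n / Real.log (Real.log n) ≤
      ((univ.filter (fun i => birth i = u)).card : ℝ)) :
    Real.log n / Real.log (Real.log n) ≤ (β : ℝ) * (2 * β + 1) ^ d :=
  torus_lower_bound_heavy_vertex_general d m n N birth place β hdist hload u hheavy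
end

section
/- (Concentration of balls born in a grid cube) In the d-dimensional torus grid on n vertices, let u be a vertex and r ≥ (4d)^d (log n / log log n)^{1/(d+1)} with r ≤ n^{1/d}/2. If n balls have i.i.d. uniform birthplaces, then the probability that the number of balls born in B̃_u^r exceeds ρ(r) := 4e(d+1)(log n / log log n)^{1/(d+1)}·(3r)^d is at most n^{-3}. Specifically, P[Σ_{v∈B̃_u^r} Z_v ≥ ρ(r)] ≤ C(n, ρ(r))·(|B̃_u^r|/n)^{ρ(r)} ≤ (e·(3r)^d/ρ(r))^{ρ(r)} ≤ n^{-3}. -/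
/-!
The cube has at most `(2r+1)^d ≤ (3r)^d` points. If at least `k` of the `n` balls land in a set
`B`, then some `k` of them do, so by a union bound over `k`-sets the probability is at most
`C(n,k) (|B|/n)^k ≤ (e|B|/k)^k`. With `k = ⌈ρ⌉` and `L = (log n / log log n)^{1/(d+1)}` this is
at most `(4(d+1)L)^{-ρ}`. Since `3r ≥ L`, `ρ ≥ 4e(d+1) L^{d+1} = 4e(d+1) log n / log log n`, while
`log L ≥ log log n / (2(d+1))`; hence `ρ log (4(d+1)L) ≥ 2e log n ≥ 3 log n`.
-/

open Finset
open scoped Classical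

open Real
open scoped Nat

lemma add_sub_mod_eq_ite {m a x : ℕ} (ha : a < m) (hx : x < m) :
    (x + m - a) % m = if a ≤ x then x - a else x + m - a := by
  split_ifs with h
  · rw [show x + m - a = x - a + m by omega, Nat.add_mod_right, Nat.mod_eq_of_lt (by omega)]
  · exact Nat.mod_eq_of_lt (by omega)

/-- The offset `x - a (mod m)` embeds the cyclic ball into `[0, r] ∪ [m - r, m)`. -/
lemma card_filter_cdist_le {m : ℕ} (a : Fin m) (r : ℕ) :
    #{x | cdist a x ≤ r} ≤ 2 * r + 1 := by
  have hoff (x : Fin m) := add_sub_mod_eq_ite a.2 x.2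
  have hoff' (x : Fin m) := add_sub_mod_eq_ite x.2 a.2
  calc #{x | cdist a x ≤ r} ≤ #(range (r + 1) ∪ Ico (m - r) m) := by
        refine card_le_card_of_injOn (fun x => (x.1 + m - a.1) % m) (fun x hx => ?_)
          (fun x _ y _ hxy => ?_)
        · rw [mem_coe, mem_filter_univ, cdist, hoff x, hoff' x] at hx
          simp only [coe_union, coe_range, coe_Ico, Set.mem_union, Set.mem_Iio, Set.mem_Ico,
            hoff x]
          have := x.2
          split_ifs at hx ⊢ <;> omega
        · simp only [hoff x, hoff y] at hxy
          have := x.2; have := y.2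
          exact Fin.ext (by split_ifs at hxy <;> omega)
    _ ≤ 2 * r + 1 := (card_union_le _ _).trans (by rw [card_range, Nat.card_Ico]; omega)

lemma card_filter_forall_cdist_le {d m : ℕ} (u : Fin d → Fin m) (r : ℕ) :
    #{v : Fin d → Fin m | ∀ j, cdist (u j) (v j) ≤ r} ≤ (2 * r + 1) ^ d := by
  have hcube : ({v | ∀ j, cdist (u j) (v j) ≤ r} : Finset (Fin d → Fin m)) =
      Fintype.piFinset fun j => {x | cdist (u j) x ≤ r} := by
    ext; simp
  rw [hcube, Fintype.card_piFinset]
  exact (prod_le_prod' fun j _ => card_filter_cdist_le (u j) r).trans (by simp)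

lemma card_filter_forall_cdist_le_three_mul_pow {d m r : ℕ} (u : Fin d → Fin m) (hr : 1 ≤ r) :
    #{v : Fin d → Fin m | ∀ j, cdist (u j) (v j) ≤ r} ≤ (3 * r) ^ d :=
  (card_filter_forall_cdist_le u r).trans (Nat.pow_le_pow_left (by omega) d)

lemma choose_mul_pow_le_exp_one_mul_div_pow (n k : ℕ) {p : ℝ} (hp : 0 ≤ p) :
    n.choose k * p ^ k ≤ (exp 1 * n * p / k) ^ k := by
  rcases k.eq_zero_or_pos with rfl | hk
  · simp
  calc n.choose k * p ^ k ≤ n ^ k / k ! * p ^ k := by gcongr; exact Nat.choose_le_pow_div k n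
    _ = (n * p / k) ^ k * (k ^ k / k !) := by rw [div_pow, mul_pow]; field_simp
    _ ≤ (n * p / k) ^ k * exp 1 ^ k := by
        gcongr
        rw [exp_one_pow]
        exact pow_div_factorial_le_exp _ k.cast_nonneg k
    _ = (exp 1 * n * p / k) ^ k := by ring

section Counting

variable {ι V : Type*} [Fintype ι] [DecidableEq ι] [Fintype V] [DecidableEq V]

/-- A map with at least `k` coordinates in `B` lies, for some `k`-set `S` of coordinates, in the
box that is `B` on `S` and `V` elsewhere. -/
lemma card_filter_le_card_filter_mem (B : Finset V) (k : ℕ) :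
    #{f : ι → V | k ≤ #{i | f i ∈ B}} ≤
      (Fintype.card ι).choose k * #B ^ k * Fintype.card V ^ (Fintype.card ι - k) := by
  set box : Finset ι → Finset (ι → V) := fun S =>
    Fintype.piFinset fun i => if i ∈ S then B else univ
  have hcover : ({f | k ≤ #{i | f i ∈ B}} : Finset (ι → V)) ⊆
      (powersetCard k univ).biUnion box := by
    intro f hf
    obtain ⟨S, hSB, hS⟩ := exists_subset_card_eq ((mem_filter_univ f).1 hf)
    refine mem_biUnion.2 ⟨S, mem_powersetCard_univ.2 hS, Fintype.mem_piFinset.2 fun i => ?_⟩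
    split_ifs with hi
    · exact (mem_filter.1 (hSB hi)).2
    · exact mem_univ _
  have hbox : ∀ S ∈ powersetCard k (univ : Finset ι),
      #(box S) = #B ^ k * Fintype.card V ^ (Fintype.card ι - k) := by
    intro S hS
    have hSk := mem_powersetCard_univ.1 hS
    simp only [box, Fintype.card_piFinset, apply_ite card, card_univ, prod_ite, prod_const]
    simp [filter_not, card_sdiff_of_subset, hSk]
  calc #{f : ι → V | k ≤ #{i | f i ∈ B}}
      ≤ #((powersetCard k univ).biUnion box) := card_le_card hcover
    _ ≤ ∑ S ∈ powersetCard k univ, #(box S) := card_biUnion_le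
    _ = _ := by
      rw [sum_congr rfl hbox, sum_const, card_powersetCard, card_univ, smul_eq_mul, mul_assoc]

lemma card_filter_le_card_filter_mem_div_le [Nonempty V] (B : Finset V) (k : ℕ) :
    (#{f : ι → V | k ≤ #{i | f i ∈ B}} : ℝ) / Fintype.card V ^ Fintype.card ι ≤
      (Fintype.card ι).choose k * (#B / Fintype.card V) ^ k := by
  have hcount := card_filter_le_card_filter_mem (ι := ι) B k
  set N := Fintype.card ι
  set n := Fintype.card V
  rcases lt_or_ge N k with hNk | hkN
  · have hempty : #{f : ι → V | k ≤ #{i | f i ∈ B}} = 0 :=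
      Nat.le_zero.1 (hcount.trans_eq (by rw [Nat.choose_eq_zero_of_lt hNk, zero_mul, zero_mul]))
    rw [hempty, Nat.cast_zero, zero_div]
    positivity
  have hn : (n : ℝ) ≠ 0 := by positivity
  calc (#{f : ι → V | k ≤ #{i | f i ∈ B}} : ℝ) / n ^ N
      ≤ (N.choose k * #B ^ k * n ^ (N - k) : ℕ) / (n ^ k * n ^ (N - k) : ℝ) := by
        rw [← pow_add, Nat.add_sub_cancel' hkN]
        gcongr
    _ = N.choose k * (#B / n) ^ k := by
        push_cast
        rw [div_pow]
        field_simp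

lemma card_filter_le_card_filter_mem_div_le_pow [Nonempty V]
    (hιV : Fintype.card ι = Fintype.card V) (B : Finset V) (k : ℕ) :
    (#{f : ι → V | k ≤ #{i | f i ∈ B}} : ℝ) / Fintype.card V ^ Fintype.card ι ≤
      (exp 1 * #B / k) ^ k :=
  calc _ ≤ (Fintype.card ι).choose k * ((#B : ℝ) / Fintype.card V) ^ k :=
        card_filter_le_card_filter_mem_div_le B k
    _ ≤ (exp 1 * Fintype.card ι * (#B / Fintype.card V) / k) ^ k :=
        choose_mul_pow_le_exp_one_mul_div_pow _ k (by positivity)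
    _ = (exp 1 * #B / k) ^ k := by rw [hιV, mul_assoc, mul_div_cancel₀ _ (by positivity)]

end Counting

lemma div_ceil_pow_ceil_le_rpow {a q ρ : ℝ} (ha : 0 ≤ a) (hq₀ : 0 < q) (hq₁ : q ≤ 1)
    (h : a ≤ q * ρ) : (a / ⌈ρ⌉₊) ^ ⌈ρ⌉₊ ≤ q ^ ρ := by
  have hρ : ρ ≤ ⌈ρ⌉₊ := Nat.le_ceil ρ
  have haq : a / ⌈ρ⌉₊ ≤ q := div_le_of_le_mul₀ (by positivity) hq₀.le (h.trans (by gcongr))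
  calc (a / ⌈ρ⌉₊) ^ ⌈ρ⌉₊ ≤ q ^ ⌈ρ⌉₊ := by gcongr
    _ = q ^ (⌈ρ⌉₊ : ℝ) := (rpow_natCast q _).symm
    _ ≤ q ^ ρ := rpow_le_rpow_of_exponent_ge hq₀ hq₁ hρ

lemma inv_rpow_le_zpow_neg {c x ρ : ℝ} (hc : 0 < c) (hx : 0 < x) {k : ℤ}
    (h : k * log x ≤ ρ * log c) : c⁻¹ ^ ρ ≤ x ^ (-k) := by
  rw [← rpow_intCast, rpow_def_of_pos (inv_pos.2 hc), rpow_def_of_pos hx, log_inv]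
  push_cast
  exact exp_le_exp.2 (by linarith)

lemma log_le_half_self {y : ℝ} (hy : 0 < y) : log y ≤ y / 2 := by
  rw [log_le_iff_le_exp hy]
  nlinarith [quadratic_le_exp_of_nonneg (by positivity : 0 ≤ y / 2), sq_nonneg (y - 2)]

lemma half_log_le_log_div_log {x : ℝ} (hx : 1 < x) : log x / 2 ≤ log (x / log x) := by
  have hlog := log_pos hx
  rw [log_div (by linarith) hlog.ne']
  linarith [log_le_half_self hlog]

lemma one_lt_log_of_three_le {x : ℝ} (hx : 3 ≤ x) : 1 < log x := by
  rw [lt_log_iff_exp_lt (by linarith)]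
  linarith [exp_one_lt_d9]

lemma one_le_div_log {x : ℝ} (hx : 1 < x) : 1 ≤ x / log x :=
  (one_le_div (log_pos hx)).2 (log_le_self (by linarith))

lemma rpow_one_div_succ_pow {x : ℝ} (hx : 0 ≤ x) (d : ℕ) :
    (x ^ ((1 : ℝ) / (d + 1))) ^ (d + 1) = x := by
  rw [one_div, ← Nat.cast_succ]
  exact rpow_inv_natCast_pow hx d.succ_ne_zero

lemma one_le_four_mul_pow (d : ℕ) : (1 : ℝ) ≤ (4 * d) ^ d := by
  rcases d.eq_zero_or_pos with rfl | hd
  · simp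
  · exact one_le_pow₀ (by norm_cast; omega)

lemma three_mul_le_mul_log_of_pow_eq {x L s : ℝ} {d : ℕ} (hx : 1 < x) (hL₀ : 0 < L)
    (hL : L ^ (d + 1) = x / log x) (hLs : L ≤ s) :
    3 * x ≤ 4 * exp 1 * (d + 1) * L * s ^ d * log (4 * (d + 1) * L) := by
  have hlog := log_pos hx
  have hs : 0 < s := hL₀.trans_le hLs
  have hlogL : log x / (2 * (d + 1)) ≤ log (4 * (d + 1) * L) := by
    have h := half_log_le_log_div_log hx
    rw [← hL, log_pow] at h
    calc log x / (2 * (d + 1)) ≤ log L := by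
          rw [div_le_iff₀ (by positivity)]; push_cast at h; linarith
      _ ≤ log (4 * (d + 1) * L) := log_le_log hL₀ (by nlinarith)
  have hmass : 4 * exp 1 * (d + 1) * (x / log x) ≤ 4 * exp 1 * (d + 1) * L * s ^ d := by
    rw [← hL, pow_succ, mul_comm (L ^ d), ← mul_assoc]
    gcongr
  calc 3 * x ≤ 2 * exp 1 * x := by nlinarith [exp_one_gt_d9]
    _ = 4 * exp 1 * (d + 1) * (x / log x) * (log x / (2 * (d + 1))) := by
        field_simp; ring
    _ ≤ _ := mul_le_mul hmass hlogL (by positivity) (by positivity)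

theorem torus_cube_concentration_general (d : ℕ) :
    ∃ n₀ : ℕ, ∀ m : ℕ, 0 < m → n₀ ≤ m ^ d →
      ∀ (u : Fin d → Fin m) (r : ℕ),
        ((4 * d : ℝ) ^ d *
          (Real.log (m ^ d) / Real.log (Real.log (m ^ d))) ^ ((1 : ℝ) / (d + 1))
            ≤ (r : ℝ)) →
        ((r : ℝ) ≤ (m : ℝ) / 2) →
        ((univ.filter (fun bs : Fin (m ^ d) → (Fin d → Fin m) =>
            (4 * Real.exp 1 * (d + 1) *
              (Real.log (m ^ d) / Real.log (Real.log (m ^ d))) ^ ((1 : ℝ) / (d + 1)) *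
              (3 * r : ℝ) ^ d : ℝ)
              ≤ ((univ.filter (fun i => ∀ j, cdist (u j) (bs i j) ≤ r)).card : ℝ))).card
            : ℝ) / ((m : ℝ) ^ d) ^ (m ^ d)
          ≤ ((m : ℝ) ^ d) ^ (-(3 : ℤ)) := by
  refine ⟨3, fun m hm hn u r hr _ => ?_⟩
  have : Nonempty (Fin m) := ⟨⟨0, hm⟩⟩
  set n : ℝ := (m : ℝ) ^ d
  set L := (log n / log (log n)) ^ ((1 : ℝ) / (d + 1))
  set ρ := 4 * exp 1 * (d + 1) * L * (3 * r : ℝ) ^ d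
  set B : Finset (Fin d → Fin m) := {v | ∀ j, cdist (u j) (v j) ≤ r}
  have hlogn := one_lt_log_of_three_le (show (3 : ℝ) ≤ (m : ℝ) ^ d by exact_mod_cast hn)
  have hL : 1 ≤ L := one_le_rpow (one_le_div_log hlogn) (by positivity)
  have hLr : L ≤ r := (le_mul_of_one_le_left (by positivity) (one_le_four_mul_pow d)).trans hr
  have hB : (#B : ℝ) ≤ (3 * r) ^ d := by
    exact_mod_cast card_filter_forall_cdist_le_three_mul_pow u (by exact_mod_cast hL.trans hLr)
  have hevent : (univ.filter fun f : Fin (m ^ d) → Fin d → Fin m =>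
      ρ ≤ (#{i | ∀ j, cdist (u j) (f i j) ≤ r} : ℝ)) = univ.filter fun f =>
      ⌈ρ⌉₊ ≤ #{i | f i ∈ B} :=
    filter_congr fun f _ => by simp [B, Nat.ceil_le]
  rw [hevent]
  calc _ ≤ (exp 1 * #B / ⌈ρ⌉₊) ^ ⌈ρ⌉₊ := by
        have h := card_filter_le_card_filter_mem_div_le_pow (ι := Fin (m ^ d)) (by simp) B ⌈ρ⌉₊
        simp only [Fintype.card_fin, Fintype.card_fun, Nat.cast_pow] at h
        exact h
    _ ≤ (4 * (d + 1) * L)⁻¹ ^ ρ := by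
        refine div_ceil_pow_ceil_le_rpow (by positivity) (by positivity)
          (inv_le_one_of_one_le₀ (by nlinarith)) ?_
        calc exp 1 * #B ≤ exp 1 * (3 * r) ^ d := by gcongr
          _ = (4 * (d + 1) * L)⁻¹ * ρ := by field_simp; ring
    _ ≤ n ^ (-3 : ℤ) := inv_rpow_le_zpow_neg (by positivity) (by positivity) <| by
        push_cast
        exact three_mul_le_mul_log_of_pow_eq hlogn (by positivity)
          (rpow_one_div_succ_pow (by linarith [one_le_div_log hlogn]) d) (by linarith)

/-- **Concentration of the number of balls born in a grid cube.**
Let `d ≥ 1` be constant.  For all sufficiently large `n = m^d`: if `n` balls have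
i.i.d. uniform birthplaces among the `n` vertices of the `d`-dimensional torus grid,
then for every vertex `u` and every radius `r` with
`(4d)^d·(log n/log log n)^{1/(d+1)} ≤ r ≤ m/2`, the probability (written as a
counting fraction) that more than
`ρ(r) = 4e(d+1)(log n/log log n)^{1/(d+1)}·(3r)^d` balls are born in the `ℓ∞`-ball
of radius `r` around `u` is at most `n^{-3}`. -/
theorem torus_cube_concentration (d : ℕ) (hd : 1 ≤ d) :
    ∃ n₀ : ℕ, ∀ m : ℕ, 0 < m → n₀ ≤ m ^ d →
      ∀ (u : Fin d → Fin m) (r : ℕ),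
        ((4 * d : ℝ) ^ d *
          (Real.log (m ^ d) / Real.log (Real.log (m ^ d))) ^ ((1 : ℝ) / (d + 1))
            ≤ (r : ℝ)) →
        ((r : ℝ) ≤ (m : ℝ) / 2) →
        ((univ.filter (fun bs : Fin (m ^ d) → (Fin d → Fin m) =>
            (4 * Real.exp 1 * (d + 1) *
              (Real.log (m ^ d) / Real.log (Real.log (m ^ d))) ^ ((1 : ℝ) / (d + 1)) *
              (3 * r : ℝ) ^ d : ℝ)
              ≤ ((univ.filter (fun i => ∀ j, cdist (u j) (bs i j) ≤ r)).card : ℝ))).card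
            : ℝ) / ((m : ℝ) ^ d) ^ (m ^ d)
          ≤ ((m : ℝ) ^ d) ^ (-(3 : ℤ)) :=
  torus_cube_concentration_general d
end

section
/- (Potential function growth for dense graphs) With the dense-graph setting above, define Φ(x) = Σ_{u∈V} exp(σ·Σ_{v∈N_u} x_v) with σ = max{4 log n / δ, 1}. If Φ(x) ≤ n·e^{δ/2} then for every u, Σ_{v∈N_u} x_v ≤ (3/4)δ, and after allocating one more ball (uniform birthplace, local search with uniform tie-breaking), E[Φ(X^{(t+1)}) | X^{(t)} = x] ≤ (1 + e^σ·5CΔ/n)·Φ(x). Consequently, after α = n/(e^σ·25C²) balls, E[min{Φ^{(α)}, n e^{δ/2}}] ≤ e^{δ/4}·n, and with probability at least 1 − e^{−δ/4} every vertex has a load-0 neighbor throughout, so the maximum load after α balls is at most 1. -/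
/-!
While `Φ(x) ≤ n e^{δ/2}`, the single term of `u` in `Φ` bounds the load of `N_u` by `3δ/4`,
so every vertex keeps at least `δ/4` empty neighbours. A new ball therefore stops at its
birthplace or at one of its empty neighbours, and lands in a fixed `N_u` with probability at most
`5CΔ/n`, in which case it multiplies the `u`-term of `Φ` by `e^σ`. Capping `Φ` at `n e^{δ/2}`
turns this one-step growth into geometric growth of the expected capped potential.
For the maximum load: local search only lets a vertex reach load `2` when all its neighbours are
loaded, so its neighbourhood sum is at least `δ` and `Φ ≥ e^{σδ}` exceeds the cap; Markov's
inequality applied to the capped potential bounds the probability of this by `e^{-δ/4}`.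
-/

open Finset

variable {V : Type*} [Fintype V] [DecidableEq V]

/-- The neighbors of `u` of minimal load, provided this minimal load is strictly
smaller than the load of `u`: the candidates of one local-search step. -/
def minNbrs (G : SimpleGraph V) [DecidableRel G.Adj] (x : V → ℕ) (u : V) : Finset V :=
  (G.neighborFinset u).filter
    (fun w => x w < x u ∧ ∀ w' ∈ G.neighborFinset u, x w ≤ x w')

/-- Distribution of the endpoint of a local search started at `u` with loads `x`,
breaking ties uniformly at random, computed with fuel `k` (fuel `x u` suffices since
each step strictly decreases the load). `walkDist G x k u v` is the probability of
ending at `v`. -/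
noncomputable def walkDist (G : SimpleGraph V) [DecidableRel G.Adj] (x : V → ℕ) :
    ℕ → V → V → ℝ
  | 0, u, v => if v = u then 1 else 0
  | k + 1, u, v =>
    if (minNbrs G x u).Nonempty then
      ∑ w ∈ minNbrs G x u, ((minNbrs G x u).card : ℝ)⁻¹ * walkDist G x k w v
    else if v = u then 1 else 0

/-- Probability that a ball with uniformly random birthplace is placed at `v`
when the current loads are `x`. -/
noncomputable def landProb (G : SimpleGraph V) [DecidableRel G.Adj]
    (x : V → ℕ) (v : V) : ℝ :=
  ∑ u : V, ((Fintype.card V : ℝ))⁻¹ * walkDist G x (x u) u v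

/-- Expected value of `f` applied to the load vector obtained from `x` after
allocating `t` further balls (uniform birthplaces, uniform tie-breaking). -/
noncomputable def expectAfter (G : SimpleGraph V) [DecidableRel G.Adj] :
    ℕ → (V → ℕ) → ((V → ℕ) → ℝ) → ℝ
  | 0, x, f => f x
  | t + 1, x, f =>
    ∑ v : V, landProb G x v *
      expectAfter G t (fun z => x z + if z = v then 1 else 0) f

/-- The exponential potential `Φ(x) = Σ_u exp(σ·Σ_{v∈N_u} x_v)`. -/
noncomputable def pot (G : SimpleGraph V) [DecidableRel G.Adj]
    (σ : ℝ) (x : V → ℕ) : ℝ :=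
  ∑ u : V, Real.exp (σ * ∑ w ∈ G.neighborFinset u, (x w : ℝ))


section Loads

variable {V : Type*} [Fintype V] (G : SimpleGraph V) [DecidableRel G.Adj]

def zeroNbrs (x : V → ℕ) (a : V) : Finset V :=
  (G.neighborFinset a).filter (fun w => x w = 0)

theorem degree_sub_nbrSum_le_card_zeroNbrs (x : V → ℕ) (a : V) :
    (G.degree a : ℝ) - ∑ w ∈ G.neighborFinset a, (x w : ℝ) ≤ #(zeroNbrs G x a) := by
  rw [zeroNbrs, card_filter, ← G.card_neighborFinset_eq_degree, card_eq_sum_ones]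
  push_cast
  rw [sub_le_iff_le_add, ← sum_add_distrib]
  refine sum_le_sum fun w _ => ?_
  split_ifs with h
  · simp [h]
  · have : (1 : ℝ) ≤ x w := by exact_mod_cast Nat.one_le_iff_ne_zero.2 h
    linarith

theorem exp_nbrSum_le_pot (σ : ℝ) (x : V → ℕ) (u : V) :
    Real.exp (σ * ∑ w ∈ G.neighborFinset u, (x w : ℝ)) ≤ pot G σ x :=
  single_le_sum (f := fun u => Real.exp (σ * ∑ w ∈ G.neighborFinset u, (x w : ℝ)))
    (fun _ _ => (Real.exp_pos _).le) (mem_univ u)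

theorem pot_nonneg (σ : ℝ) (x : V → ℕ) : 0 ≤ pot G σ x :=
  sum_nonneg fun _ _ => (Real.exp_pos _).le

theorem pot_zero (σ : ℝ) : pot G σ (fun _ => 0) = Fintype.card V := by
  simp [pot]

theorem nbrSum_le_of_pot_le {σ δ : ℝ} (hσ : 1 ≤ σ)
    (hσδ : 4 * Real.log (Fintype.card V) ≤ σ * δ) {x : V → ℕ}
    (hx : pot G σ x ≤ Fintype.card V * Real.exp (δ / 2)) (u : V) :
    ∑ w ∈ G.neighborFinset u, (x w : ℝ) ≤ 3 / 4 * δ := by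
  have hn : (0 : ℝ) < Fintype.card V := by exact_mod_cast Fintype.card_pos_iff.2 ⟨u⟩
  have hlog : 0 ≤ Real.log (Fintype.card V) := Real.log_nonneg (by exact_mod_cast hn)
  have hexp :
      σ * ∑ w ∈ G.neighborFinset u, (x w : ℝ) ≤ Real.log (Fintype.card V) + δ / 2 := by
    rw [← Real.exp_le_exp, Real.exp_add, Real.exp_log hn]
    exact (exp_nbrSum_le_pot G σ x u).trans hx
  have hσpos : 0 < σ := by linarith
  have hδ : 0 ≤ δ := nonneg_of_mul_nonneg_right (by linarith) hσpos
  refine le_of_mul_le_mul_left ?_ hσpos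
  nlinarith

def HeavyHasLoadedNbrs (y : V → ℕ) : Prop :=
  ∀ a, 2 ≤ y a → ∀ w ∈ G.neighborFinset a, 1 ≤ y w

theorem exp_mul_le_pot_of_heavy {σ : ℝ} (hσ : 0 ≤ σ) {δ : ℕ}
    (hδ : ∀ v, δ ≤ G.degree v) {y : V → ℕ} (hy : HeavyHasLoadedNbrs G y) {a : V}
    (ha : 2 ≤ y a) :
    Real.exp (σ * δ) ≤ pot G σ y := by
  refine le_trans ?_ (exp_nbrSum_le_pot G σ y a)
  gcongr
  calc (δ : ℝ) ≤ #(G.neighborFinset a) := by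
        rw [G.card_neighborFinset_eq_degree]
        exact_mod_cast hδ a
    _ = ∑ w ∈ G.neighborFinset a, (1 : ℝ) := by simp
    _ ≤ ∑ w ∈ G.neighborFinset a, (y w : ℝ) :=
        sum_le_sum fun w hw => by exact_mod_cast hy a ha w hw

end Loads

section LocalSearch

variable (G : SimpleGraph V) [DecidableRel G.Adj]

theorem minNbrs_eq_empty_of_eq_zero {x : V → ℕ} {u : V} (h : x u = 0) :
    minNbrs G x u = ∅ := by
  simp [minNbrs, h]

theorem le_of_minNbrs_eq_empty {x : V → ℕ} {v w : V} (h : minNbrs G x v = ∅)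
    (hw : w ∈ G.neighborFinset v) : x v ≤ x w := by
  by_contra! hlt
  obtain ⟨w₀, hw₀, hmin⟩ := exists_min_image (G.neighborFinset v) x ⟨w, hw⟩
  have : w₀ ∈ minNbrs G x v := mem_filter.2 ⟨hw₀, (hmin w hw).trans_lt hlt, hmin⟩
  simp [h] at this

theorem minNbrs_eq_zeroNbrs {x : V → ℕ} {a : V} (hxa : x a ≠ 0)
    (hZ : (zeroNbrs G x a).Nonempty) : minNbrs G x a = zeroNbrs G x a := by
  obtain ⟨z, hz⟩ := hZ
  obtain ⟨hza, hz0⟩ := mem_filter.1 hz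
  ext w
  simp only [minNbrs, zeroNbrs, mem_filter]
  constructor
  · rintro ⟨hw, -, hmin⟩
    exact ⟨hw, by simpa [hz0] using hmin z hza⟩
  · rintro ⟨hw, hw0⟩
    exact ⟨hw, by omega, fun _ _ => by omega⟩

theorem walkDist_of_minNbrs_eq_empty (x : V → ℕ) {u : V} (h : minNbrs G x u = ∅)
    (k : ℕ) (v : V) : walkDist G x k u v = if v = u then 1 else 0 := by
  cases k <;> simp [walkDist, h]

theorem walkDist_nonneg (x : V → ℕ) (k : ℕ) (u v : V) : 0 ≤ walkDist G x k u v := by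
  induction k generalizing u with
  | zero => simp only [walkDist]; positivity
  | succ k ih =>
    simp only [walkDist]
    split
    · exact sum_nonneg fun w _ => mul_nonneg (by positivity) (ih w)
    · positivity

theorem sum_walkDist (x : V → ℕ) (k : ℕ) (u : V) : ∑ v, walkDist G x k u v = 1 := by
  induction k generalizing u with
  | zero => simp [walkDist]
  | succ k ih =>
    simp only [walkDist]
    split_ifs with h
    · rw [sum_comm]
      simp only [← mul_sum, ih, mul_one, sum_const, nsmul_eq_mul]
      exact mul_inv_cancel₀ (by exact_mod_cast h.card_pos.ne')
    · simp

theorem minNbrs_eq_empty_or_add_le_of_walkDist_ne_zero (x : V → ℕ) (k : ℕ) {u v : V}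
    (h : walkDist G x k u v ≠ 0) : minNbrs G x v = ∅ ∨ x v + k ≤ x u := by
  induction k generalizing u with
  | zero =>
    right
    by_cases hvu : v = u
    · subst hvu; omega
    · simp [walkDist, hvu] at h
  | succ k ih =>
    simp only [walkDist] at h
    split_ifs at h with hne hvu
    · obtain ⟨w, hw, hwv⟩ := exists_ne_zero_of_sum_ne_zero h
      have hxw : x w < x u := (mem_filter.1 hw).2.1
      exact (ih (right_ne_zero_of_mul hwv)).imp_right fun _ => by omega
    · exact Or.inl (hvu ▸ not_nonempty_iff_eq_empty.1 hne)
    · exact absurd rfl h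

/-- Empty neighbours are the lightest ones and have no lighter neighbour themselves, so a ball
leaving a loaded vertex stops after one step. -/
theorem walkDist_le_of_zeroNbrs_nonempty {x : V → ℕ} {a : V}
    (hZ : (zeroNbrs G x a).Nonempty) (v : V) :
    walkDist G x (x a) a v ≤
      (if v = a then 1 else 0) + if G.Adj a v then ((#(zeroNbrs G x a) : ℝ))⁻¹ else 0 := by
  have hnn : (0 : ℝ) ≤ if G.Adj a v then ((#(zeroNbrs G x a) : ℝ))⁻¹ else 0 := by
    positivity
  cases hxa : x a with
  | zero =>
    rw [walkDist_of_minNbrs_eq_empty G x (minNbrs_eq_empty_of_eq_zero G hxa)]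
    linarith
  | succ k =>
    have hmin := minNbrs_eq_zeroNbrs G (by omega) hZ
    have hsink : ∀ w ∈ zeroNbrs G x a, walkDist G x k w v = if v = w then 1 else 0 :=
      fun w hw => walkDist_of_minNbrs_eq_empty G x
        (minNbrs_eq_empty_of_eq_zero G (mem_filter.1 hw).2) k v
    rw [walkDist, if_pos (hmin ▸ hZ), hmin, sum_congr rfl fun w hw => by rw [hsink w hw]]
    simp only [mul_ite, mul_one, mul_zero, sum_ite_eq]
    have hself : (0 : ℝ) ≤ if v = a then 1 else 0 := by positivity
    by_cases hv : v ∈ zeroNbrs G x a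
    · rw [if_pos hv, if_pos ((G.mem_neighborFinset a v).1 (mem_filter.1 hv).1)]
      linarith
    · rw [if_neg hv]
      linarith

end LocalSearch

section Allocation

variable (G : SimpleGraph V) [DecidableRel G.Adj]

theorem landProb_nonneg (x : V → ℕ) (v : V) : 0 ≤ landProb G x v :=
  sum_nonneg fun u _ => mul_nonneg (by positivity) (walkDist_nonneg G x _ u v)

theorem sum_landProb (hV : 0 < Fintype.card V) (x : V → ℕ) : ∑ v, landProb G x v = 1 := by
  simp only [landProb]
  rw [sum_comm]
  simp only [← mul_sum, sum_walkDist, mul_one, sum_const, card_univ, nsmul_eq_mul]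
  exact mul_inv_cancel₀ (by exact_mod_cast hV.ne')

theorem minNbrs_eq_empty_of_landProb_ne_zero {x : V → ℕ} {v : V} (h : landProb G x v ≠ 0) :
    minNbrs G x v = ∅ := by
  obtain ⟨u, -, hu⟩ := exists_ne_zero_of_sum_ne_zero h
  exact (minNbrs_eq_empty_or_add_le_of_walkDist_ne_zero G x (x u) (right_ne_zero_of_mul hu)).elim
    id fun hle => minNbrs_eq_empty_of_eq_zero G (by omega)

theorem landProb_le_of_le_card_zeroNbrs {x : V → ℕ} {c : ℝ} (hc : 0 < c)
    (hZ : ∀ a, c ≤ #(zeroNbrs G x a)) (v : V) :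
    landProb G x v ≤ (1 + G.degree v / c) / Fintype.card V := by
  have hwalk : ∀ a, walkDist G x (x a) a v ≤
      (if v = a then 1 else 0) + if G.Adj a v then c⁻¹ else 0 := by
    intro a
    have hZpos : (0 : ℝ) < #(zeroNbrs G x a) := hc.trans_le (hZ a)
    refine (walkDist_le_of_zeroNbrs_nonempty G
      (card_pos.1 (by exact_mod_cast hZpos)) v).trans ?_
    gcongr
    split_ifs
    · exact inv_anti₀ hc (hZ a)
    · rfl
  calc landProb G x v
      ≤ ∑ a, (Fintype.card V : ℝ)⁻¹ *
          ((if v = a then 1 else 0) + if G.Adj a v then c⁻¹ else 0) :=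
        sum_le_sum fun a _ => mul_le_mul_of_nonneg_left (hwalk a) (by positivity)
    _ = (1 + G.degree v / c) / Fintype.card V := by
        simp [← mul_sum, sum_add_distrib, ← G.card_neighborFinset_eq_degree,
          G.neighborFinset_eq_filter, G.adj_comm, div_eq_inv_mul, sum_ite, mul_comm]

theorem sum_nbrs_landProb_le {δ Δ : ℕ} {C : ℝ} (hδpos : 0 < δ)
    (hδ : ∀ v, δ ≤ G.degree v) (hΔ : ∀ v, G.degree v ≤ Δ) (hC : 1 ≤ C)
    (hCδ : (Δ : ℝ) ≤ C * δ) {x : V → ℕ}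
    (hx : ∀ u, ∑ w ∈ G.neighborFinset u, (x w : ℝ) ≤ 3 / 4 * δ) (u : V) :
    ∑ v ∈ G.neighborFinset u, landProb G x v ≤ 5 * C * Δ / Fintype.card V := by
  have hZ : ∀ a, (δ : ℝ) / 4 ≤ #(zeroNbrs G x a) := fun a => by
    have : (δ : ℝ) ≤ G.degree a := by exact_mod_cast hδ a
    linarith [degree_sub_nbrSum_le_card_zeroNbrs G x a, hx a]
  have hland : ∀ v, landProb G x v ≤ 5 * C / Fintype.card V := fun v => by
    refine (landProb_le_of_le_card_zeroNbrs G (by positivity) hZ v).trans ?_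
    gcongr
    have : (G.degree v : ℝ) ≤ C * δ := (Nat.cast_le.2 (hΔ v)).trans hCδ
    have : (G.degree v : ℝ) / (δ / 4) ≤ 4 * C := by
      rw [div_le_iff₀ (by positivity)]
      linarith
    linarith
  calc ∑ v ∈ G.neighborFinset u, landProb G x v
      ≤ #(G.neighborFinset u) • (5 * C / Fintype.card V) :=
        sum_le_card_nsmul _ _ _ fun v _ => hland v
    _ ≤ Δ * (5 * C / Fintype.card V) := by
        rw [nsmul_eq_mul, G.card_neighborFinset_eq_degree]
        gcongr
        exact hΔ u
    _ = 5 * C * Δ / Fintype.card V := by ring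

theorem pot_add_ball (σ : ℝ) (x : V → ℕ) (v : V) :
    pot G σ (fun z => x z + if z = v then 1 else 0) =
      ∑ u, Real.exp (σ * ∑ w ∈ G.neighborFinset u, (x w : ℝ)) *
        if v ∈ G.neighborFinset u then Real.exp σ else 1 := by
  refine sum_congr rfl fun u _ => ?_
  push_cast
  rw [sum_add_distrib, sum_ite_eq', mul_add, Real.exp_add]
  split_ifs <;> simp

theorem sum_landProb_mul_pot_add_ball_le (hV : 0 < Fintype.card V) {σ : ℝ} (hσ : 0 ≤ σ)
    {x : V → ℕ} {p : ℝ} (hp : ∀ u, ∑ v ∈ G.neighborFinset u, landProb G x v ≤ p) :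
    ∑ v, landProb G x v * pot G σ (fun z => x z + if z = v then 1 else 0) ≤
      (1 + Real.exp σ * p) * pot G σ x := by
  have hterm : ∀ u, ∑ v, landProb G x v * (if v ∈ G.neighborFinset u then Real.exp σ else 1)
      ≤ 1 + Real.exp σ * p := by
    intro u
    have hsplit : ∀ v, landProb G x v * (if v ∈ G.neighborFinset u then Real.exp σ else 1) =
        landProb G x v + (Real.exp σ - 1) *
          if v ∈ G.neighborFinset u then landProb G x v else 0 :=
      fun v => by split_ifs <;> ring
    rw [sum_congr rfl fun v _ => hsplit v, sum_add_distrib, ← mul_sum, sum_ite_mem, univ_inter,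
      sum_landProb G hV]
    have hS := sum_nonneg fun v (_ : v ∈ G.neighborFinset u) => landProb_nonneg G x v
    have he : 1 ≤ Real.exp σ := Real.one_le_exp hσ
    nlinarith [hp u]
  calc ∑ v, landProb G x v * pot G σ (fun z => x z + if z = v then 1 else 0)
      = ∑ u, Real.exp (σ * ∑ w ∈ G.neighborFinset u, (x w : ℝ)) *
          ∑ v, landProb G x v * (if v ∈ G.neighborFinset u then Real.exp σ else 1) := by
        simp only [pot_add_ball, mul_sum]
        rw [sum_comm]
        exact sum_congr rfl fun u _ => sum_congr rfl fun v _ => by ring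
    _ ≤ ∑ u, Real.exp (σ * ∑ w ∈ G.neighborFinset u, (x w : ℝ)) *
          (1 + Real.exp σ * p) :=
        sum_le_sum fun u _ => mul_le_mul_of_nonneg_left (hterm u) (Real.exp_pos _).le
    _ = (1 + Real.exp σ * p) * pot G σ x := by rw [← sum_mul, mul_comm, pot]

/-- A ball stops at `v` only if no neighbour of `v` is lighter than `v`. -/
theorem heavyHasLoadedNbrs_add_ball {y : V → ℕ} {v : V} (hy : HeavyHasLoadedNbrs G y)
    (hv : landProb G y v ≠ 0) :
    HeavyHasLoadedNbrs G (fun z => y z + if z = v then 1 else 0) := by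
  intro a ha w hw
  change 2 ≤ y a + (if a = v then 1 else 0) at ha
  change 1 ≤ y w + if w = v then 1 else 0
  refine le_trans ?_ (Nat.le_add_right _ _)
  by_cases hav : a = v
  · subst hav
    have := le_of_minNbrs_eq_empty G (minNbrs_eq_empty_of_landProb_ne_zero G hv) hw
    rw [if_pos rfl] at ha
    omega
  · rw [if_neg hav] at ha
    exact hy a (by omega) w hw

end Allocation

section Expectation

variable (G : SimpleGraph V) [DecidableRel G.Adj]

theorem expectAfter_mono_of_invariant {f g : (V → ℕ) → ℝ} (Q : (V → ℕ) → Prop)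
    (hQ : ∀ y v, Q y → landProb G y v ≠ 0 → Q (fun z => y z + if z = v then 1 else 0))
    (hfg : ∀ y, Q y → f y ≤ g y) (t : ℕ) {x : V → ℕ} (hx : Q x) :
    expectAfter G t x f ≤ expectAfter G t x g := by
  induction t generalizing x with
  | zero => exact hfg x hx
  | succ t ih =>
    refine sum_le_sum fun v _ => ?_
    by_cases hv : landProb G x v = 0
    · simp [hv]
    · exact mul_le_mul_of_nonneg_left (ih (hQ x v hx hv)) (landProb_nonneg G x v)

theorem expectAfter_mono {f g : (V → ℕ) → ℝ} (hfg : ∀ y, f y ≤ g y) (t : ℕ)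
    (x : V → ℕ) :
    expectAfter G t x f ≤ expectAfter G t x g :=
  expectAfter_mono_of_invariant G (fun _ => True) (fun _ _ _ _ => trivial)
    (fun y _ => hfg y) t trivial

theorem expectAfter_affine (hV : 0 < Fintype.card V) (a b : ℝ) (f : (V → ℕ) → ℝ)
    (t : ℕ) (x : V → ℕ) :
    expectAfter G t x (fun y => a + b * f y) = a + b * expectAfter G t x f := by
  induction t generalizing x with
  | zero => rfl
  | succ t ih =>
    simp only [expectAfter, ih, mul_add, sum_add_distrib, ← sum_mul, sum_landProb G hV,
      mul_left_comm _ b, ← mul_sum]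
    ring

theorem expectAfter_const (hV : 0 < Fintype.card V) (c : ℝ) (t : ℕ) (x : V → ℕ) :
    expectAfter G t x (fun _ => c) = c := by
  simpa using expectAfter_affine G hV c 0 (fun _ => 0) t x

theorem expectAfter_min_le_of_step_le (hV : 0 < Fintype.card V) {Φ : (V → ℕ) → ℝ}
    {M β : ℝ} (hM : 0 ≤ M) (hβ : 0 ≤ β)
    (hstep : ∀ x, Φ x ≤ M →
      ∑ v, landProb G x v * Φ (fun z => x z + if z = v then 1 else 0) ≤ (1 + β) * Φ x)
    (t : ℕ) (x : V → ℕ) :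
    expectAfter G t x (fun y => min (Φ y) M) ≤ (1 + β) ^ t * min (Φ x) M := by
  induction t generalizing x with
  | zero => simp [expectAfter]
  | succ t ih =>
    rcases le_or_gt (Φ x) M with hx | hx
    · calc expectAfter G (t + 1) x (fun y => min (Φ y) M)
          ≤ ∑ v, landProb G x v *
              ((1 + β) ^ t * Φ (fun z => x z + if z = v then 1 else 0)) :=
            sum_le_sum fun v _ => mul_le_mul_of_nonneg_left
              ((ih _).trans (by gcongr; exact min_le_left _ _)) (landProb_nonneg G x v)
        _ = (1 + β) ^ t *
              ∑ v, landProb G x v * Φ (fun z => x z + if z = v then 1 else 0) := by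
            rw [mul_sum]
            exact sum_congr rfl fun v _ => by ring
        _ ≤ (1 + β) ^ t * ((1 + β) * Φ x) := by gcongr; exact hstep x hx
        _ = (1 + β) ^ (t + 1) * min (Φ x) M := by rw [min_eq_left hx]; ring
    · rw [min_eq_right hx.le]
      calc expectAfter G (t + 1) x (fun y => min (Φ y) M)
          ≤ expectAfter G (t + 1) x (fun _ => M) :=
            expectAfter_mono G (fun _ => min_le_right _ _) _ x
        _ = M := expectAfter_const G hV M _ x
        _ ≤ (1 + β) ^ (t + 1) * M := le_mul_of_one_le_left hM (one_le_pow₀ (by linarith))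

theorem expectAfter_min_pot_le (hV : 0 < Fintype.card V) {σ M β : ℝ}
    (hM : (Fintype.card V : ℝ) ≤ M) (hβ : 0 ≤ β)
    (hstep : ∀ x, pot G σ x ≤ M →
      ∑ v, landProb G x v * pot G σ (fun z => x z + if z = v then 1 else 0) ≤
        (1 + β) * pot G σ x)
    (t : ℕ) :
    expectAfter G t (fun _ => 0) (fun y => min (pot G σ y) M) ≤
      Real.exp (β * t) * Fintype.card V := by
  have hn : (0 : ℝ) ≤ Fintype.card V := Nat.cast_nonneg _
  refine (expectAfter_min_le_of_step_le G hV (hn.trans hM) hβ hstep t _).trans ?_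
  rw [pot_zero, min_eq_left hM, mul_comm β, Real.exp_nat_mul]
  gcongr
  linarith [Real.add_one_le_exp β]

theorem one_sub_div_le_expectAfter_maxLoad_le_one (hV : 0 < Fintype.card V) {σ : ℝ}
    (hσ : 0 ≤ σ) {δ : ℕ} (hδ : ∀ v, δ ≤ G.degree v) {M : ℝ} (hM : 0 < M)
    (hMσ : M ≤ Real.exp (σ * δ)) (t : ℕ) :
    1 - expectAfter G t (fun _ => 0) (fun y => min (pot G σ y) M) / M ≤
      expectAfter G t (fun _ => 0) (fun y => if ∀ v, y v ≤ 1 then 1 else 0) := by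
  have hpointwise : ∀ y, HeavyHasLoadedNbrs G y →
      1 + -M⁻¹ * min (pot G σ y) M ≤ if ∀ v, y v ≤ 1 then 1 else 0 := by
    intro y hy
    split_ifs with h
    · have : 0 ≤ min (pot G σ y) M := le_min (pot_nonneg G σ y) hM.le
      have : 0 ≤ M⁻¹ * min (pot G σ y) M := by positivity
      linarith
    · push Not at h
      obtain ⟨a, ha⟩ := h
      rw [min_eq_right (hMσ.trans (exp_mul_le_pot_of_heavy G hσ hδ hy ha)),
        neg_mul, inv_mul_cancel₀ hM.ne']
      norm_num
  have := expectAfter_mono_of_invariant G _ (fun _ _ => heavyHasLoadedNbrs_add_ball G) hpointwise t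
    (x := fun _ => 0) (fun _ ha => absurd ha (by simp))
  rw [expectAfter_affine G hV] at this
  rw [div_eq_inv_mul]
  linarith

theorem one_sub_exp_le_expectAfter_maxLoad_le_one (hV : 0 < Fintype.card V) {σ : ℝ}
    (hσ : 1 ≤ σ) {δ : ℕ} (hδ : ∀ v, δ ≤ G.degree v)
    (hσδ : 4 * Real.log (Fintype.card V) ≤ σ * δ) (t : ℕ)
    (hE : expectAfter G t (fun _ => 0)
        (fun y => min (pot G σ y) (Fintype.card V * Real.exp (δ / 2))) ≤
      Real.exp (δ / 4) * Fintype.card V) :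
    1 - Real.exp (-(δ : ℝ) / 4) ≤
      expectAfter G t (fun _ => 0) (fun y => if ∀ v, y v ≤ 1 then 1 else 0) := by
  have hn : (0 : ℝ) < Fintype.card V := by exact_mod_cast hV
  have hcap : Fintype.card V * Real.exp (δ / 2) ≤ Real.exp (σ * δ) := by
    rw [← Real.exp_log hn, ← Real.exp_add]
    gcongr
    nlinarith
  have hratio : Real.exp (δ / 4) * Fintype.card V / (Fintype.card V * Real.exp (δ / 2)) =
      Real.exp (-(δ : ℝ) / 4) := by
    rw [div_eq_iff (by positivity), show (δ : ℝ) / 4 = -δ / 4 + δ / 2 by ring, Real.exp_add]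
    ring
  refine le_trans ?_ (one_sub_div_le_expectAfter_maxLoad_le_one G hV (by linarith) hδ
    (by positivity) hcap t)
  linarith [div_le_div_of_nonneg_right hE (by positivity : 0 ≤ (Fintype.card V : ℝ) *
    Real.exp (δ / 2))]

end Expectation

/-- **Potential function growth for dense graphs.**
Let `G` be almost regular on `n` vertices with minimum degree `δ` and maximum degree
`Δ ≤ Cδ`, and set `σ = max{4 log n/δ, 1}`.  Then:
(1) if `Φ(x) ≤ n·e^{δ/2}` then every neighborhood sum satisfies
`Σ_{v∈N_u} x_v ≤ (3/4)δ`;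
(2) under the same hypothesis, allocating one further ball increases `Φ` by a factor
of at most `1 + e^σ·5CΔ/n` in expectation;
(3) consequently, for any number `α ≤ n/(e^σ·25C²)` of balls started from the empty
configuration, `E[min{Φ^{(α)}, n·e^{δ/2}}] ≤ e^{δ/4}·n`; and
(4) with probability at least `1 − e^{−δ/4}` the maximum load after these `α` balls
is at most `1`. -/
theorem dense_potential_growth (G : SimpleGraph V) [DecidableRel G.Adj]
    (n : ℕ) (hn : Fintype.card V = n) (hnpos : 0 < n)
    (δ Δ : ℕ) (hδpos : 0 < δ)
    (hδ : ∀ v, δ ≤ G.degree v) (hΔ : ∀ v, G.degree v ≤ Δ)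
    (C : ℝ) (hC : 1 ≤ C) (hCδ : (Δ : ℝ) ≤ C * δ)
    (σ : ℝ) (hσ : σ = max (4 * Real.log n / δ) 1) :
    (∀ x : V → ℕ, pot G σ x ≤ n * Real.exp (δ / 2) →
      ∀ u : V, (∑ w ∈ G.neighborFinset u, (x w : ℝ)) ≤ 3 / 4 * δ)
    ∧ (∀ x : V → ℕ, pot G σ x ≤ n * Real.exp (δ / 2) →
        (∑ v : V, landProb G x v * pot G σ (fun z => x z + if z = v then 1 else 0))
          ≤ (1 + Real.exp σ * (5 * C * Δ) / n) * pot G σ x)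
    ∧ (∀ α : ℕ, (α : ℝ) ≤ n / (Real.exp σ * 25 * C ^ 2) →
        expectAfter G α (fun _ => 0)
            (fun y => min (pot G σ y) (n * Real.exp (δ / 2)))
          ≤ Real.exp (δ / 4) * n)
    ∧ (∀ α : ℕ, (α : ℝ) ≤ n / (Real.exp σ * 25 * C ^ 2) →
        1 - Real.exp (-(δ : ℝ) / 4) ≤
          expectAfter G α (fun _ => 0)
            (fun y => if ∀ v, y v ≤ 1 then 1 else 0)) := by
  subst hn
  have hδR : (0 : ℝ) < δ := by exact_mod_cast hδpos
  have hσ1 : 1 ≤ σ := hσ ▸ le_max_right _ _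
  have hσδ : 4 * Real.log (Fintype.card V) ≤ σ * δ :=
    (div_le_iff₀ hδR).1 (hσ ▸ le_max_left _ _)
  have part1 := fun x (hx : pot G σ x ≤ Fintype.card V * Real.exp (δ / 2)) =>
    nbrSum_le_of_pot_le G hσ1 hσδ hx
  set β := Real.exp σ * (5 * C * Δ) / Fintype.card V with hβ
  have part2 : ∀ x, pot G σ x ≤ Fintype.card V * Real.exp (δ / 2) →
      ∑ v, landProb G x v * pot G σ (fun z => x z + if z = v then 1 else 0) ≤
        (1 + β) * pot G σ x := fun x hx => by
    simpa only [hβ, mul_div_assoc] using sum_landProb_mul_pot_add_ball_le G hnpos (by linarith)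
      (sum_nbrs_landProb_le G hδpos hδ hΔ hC hCδ (part1 x hx))
  have hβα : ∀ α : ℕ, (α : ℝ) ≤ Fintype.card V / (Real.exp σ * 25 * C ^ 2) →
      β * α ≤ δ / 4 := fun α hα =>
    calc β * α ≤ β * (Fintype.card V / (Real.exp σ * 25 * C ^ 2)) := by gcongr
      _ = Δ / (5 * C) := by rw [hβ]; field_simp; ring
      _ ≤ δ / 4 := by rw [div_le_div_iff₀ (by positivity) (by norm_num)]; nlinarith
  have part3 : ∀ α : ℕ, (α : ℝ) ≤ Fintype.card V / (Real.exp σ * 25 * C ^ 2) →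
      expectAfter G α (fun _ => 0)
        (fun y => min (pot G σ y) (Fintype.card V * Real.exp (δ / 2))) ≤
          Real.exp (δ / 4) * Fintype.card V := fun α hα =>
    (expectAfter_min_pot_le G hnpos
      (le_mul_of_one_le_right (Nat.cast_nonneg _) (Real.one_le_exp (by positivity)))
      (by positivity) part2 α).trans (by gcongr; exact hβα α hα)
  exact ⟨part1, part2, part3, fun α hα =>
    one_sub_exp_le_expectAfter_maxLoad_le_one G hnpos hσ1 hδ hσδ α (part3 α hα)⟩
end

section
/- (Lower bound on sparse graphs via clique-cycle construction) For any integer 2 ≤ d ≤ (log n)/e, consider the d-regular graph G formed by arranging n/(d−1) disjoint cliques of size d−1 in a cycle and joining consecutive cliques by d−1 vertex-disjoint edges. If some clique S (|S| = d−1) receives Φ_S ≥ C·log n / log((log n)/(d−1)) balls as birthplaces, then the maximum load β satisfies β·|B_S^β| ≥ Φ_S, and since |B_S^β| ≤ (2β+1)·d, it follows that β = Ω( sqrt( log n / ( d·log((log n)/d) ) ) ). -/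
open Finset

/-- The `d`-regular "clique cycle": `k` disjoint cliques of size `c` arranged in a
cycle, with consecutive cliques joined by `c` vertex-disjoint edges (here the edge
joining equal `Fin c`-coordinates).  With `c = d − 1` this graph is `d`-regular. -/
def cliqueCycle (k c : ℕ) : SimpleGraph (ZMod k × Fin c) where
  Adj p q := p ≠ q ∧
    (p.1 = q.1 ∨ ((q.1 = p.1 + 1 ∨ p.1 = q.1 + 1) ∧ p.2 = q.2))
  symm := by
    constructor
    rintro p q ⟨hne, h⟩
    refine ⟨hne.symm, ?_⟩
    rcases h with h | ⟨h, h2⟩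
    · exact Or.inl h.symm
    · exact Or.inr ⟨h.symm, h2.symm⟩
  loopless := ⟨fun p h => h.1 rfl⟩

/-!
Every ball born in the clique `S = {i₀} × Fin (d - 1)` is placed within distance `β` of `S`,
and a walk of length `ℓ` in the clique cycle moves the cycle coordinate by at most `ℓ`. So all
these balls lie in the `2β + 1` cliques with cycle coordinate in `i₀ + [-β, β]`, which have at
most `(2β + 1)(d - 1)` vertices, each holding at most `β` balls.
-/

theorem card_born_le_mul_card_of_ball_subset {V ι : Type*} [Fintype ι] [DecidableEq V]
    (G : SimpleGraph V) (birth place : ι → V) (β : ℕ)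
    (hdist : ∀ i, G.dist (birth i) (place i) ≤ β) (hload : ∀ v, #{i | place i = v} ≤ β)
    (S : V → Prop) [DecidablePred S] (B : Finset V) (hB : ∀ u, S u → ∀ v, G.dist u v ≤ β → v ∈ B) :
    #{i | S (birth i)} ≤ β * #B := by
  refine card_le_mul_card_image_of_maps_to (fun i hi ↦ hB _ (mem_filter.1 hi).2 _ (hdist i)) β
    fun v _ ↦ (card_le_card ?_).trans (hload v)
  exact monotone_filter_left _ (filter_subset _ _)

namespace cliqueCycle

variable {k c : ℕ}

theorem exists_int_of_walk {p q : ZMod k × Fin c} (w : (cliqueCycle k c).Walk p q) :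
    ∃ j : ℤ, j.natAbs ≤ w.length ∧ q.1 = p.1 + j := by
  induction w with
  | nil => exact ⟨0, by simp⟩
  | @cons a r b hadj w ih =>
    obtain ⟨j, hj, hq⟩ := ih
    rw [SimpleGraph.Walk.length_cons]
    rcases hadj.2 with hsame | ⟨hsucc | hpred, -⟩
    · exact ⟨j, by omega, by rw [hq, hsame]⟩
    · exact ⟨j + 1, by omega, by rw [hq, hsucc]; push_cast; ring⟩
    · exact ⟨j - 1, by omega, by rw [hq, hpred]; push_cast; ring⟩

theorem reachable_of_fst_eq {p q : ZMod k × Fin c} (h : p.1 = q.1) :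
    (cliqueCycle k c).Reachable p q := by
  by_cases hpq : p = q
  · exact hpq ▸ .refl p
  · exact SimpleGraph.Adj.reachable ⟨hpq, .inl h⟩

theorem reachable_add_one (i : ZMod k) (x : Fin c) :
    (cliqueCycle k c).Reachable (i, x) (i + 1, x) := by
  by_cases hpq : (i, x) = (i + 1, x)
  · exact hpq ▸ .refl _
  · exact SimpleGraph.Adj.reachable ⟨hpq, .inr ⟨.inl rfl, rfl⟩⟩

theorem reachable_add_int (i : ZMod k) (x : Fin c) (m : ℤ) :
    (cliqueCycle k c).Reachable (i, x) (i + m, x) := by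
  induction m using Int.induction_on with
  | zero => simp
  | succ m ih => simpa [add_assoc] using ih.trans (reachable_add_one (i + ((m : ℤ) : ZMod k)) x)
  | pred m ih =>
    have hstep := reachable_add_one (i + ((-(m : ℤ) - 1 : ℤ) : ZMod k)) x
    have hshift : i + ((-(m : ℤ) - 1 : ℤ) : ZMod k) + 1 = i + ((-(m : ℤ) : ℤ) : ZMod k) := by
      push_cast; ring
    rw [hshift] at hstep
    exact ih.trans hstep.symm

theorem preconnected : (cliqueCycle k c).Preconnected := fun ⟨i, x⟩ ⟨j, y⟩ ↦ by
  have hshift := reachable_add_int i y (ZMod.cast (j - i))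
  rw [ZMod.intCast_zmod_cast, add_sub_cancel] at hshift
  exact (reachable_of_fst_eq (p := (i, x)) (q := (i, y)) rfl).trans hshift

noncomputable def cliquesNear (i₀ : ZMod k) (β : ℕ) : Finset (ZMod k × Fin c) :=
  (Icc (-(β : ℤ)) β).image (fun j : ℤ ↦ i₀ + j) ×ˢ univ

theorem mem_cliquesNear_of_dist_le {i₀ : ZMod k} {β : ℕ} {u v : ZMod k × Fin c}
    (hu : u.1 = i₀) (huv : (cliqueCycle k c).dist u v ≤ β) : v ∈ cliquesNear i₀ β := by
  obtain ⟨w, hw⟩ := (preconnected u v).exists_walk_length_eq_dist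
  obtain ⟨j, hj, hv⟩ := exists_int_of_walk w
  refine mem_product.2 ⟨mem_image.2 ⟨j, mem_Icc.2 ⟨by omega, by omega⟩, ?_⟩, mem_univ _⟩
  rw [hv, hu]

theorem card_cliquesNear_le (i₀ : ZMod k) (β : ℕ) :
    #(cliquesNear (c := c) i₀ β) ≤ (2 * β + 1) * c := by
  rw [cliquesNear, card_product, card_univ, Fintype.card_fin]
  refine Nat.mul_le_mul_right _ (card_image_le.trans ?_)
  rw [Int.card_Icc]
  omega

end cliqueCycle

theorem clique_cycle_lower_bound_general (d k n : ℕ)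
    (C : ℝ)
    (birth place : Fin n → ZMod k × Fin (d - 1)) (β : ℕ)
    (hdist : ∀ i, (cliqueCycle k (d - 1)).dist (birth i) (place i) ≤ β)
    (hload : ∀ v, (univ.filter (fun i => place i = v)).card ≤ β)
    (i₀ : ZMod k)
    (hheavy : C * Real.log n / Real.log (Real.log n / (d - 1 : ℝ)) ≤
      ((univ.filter (fun i => (birth i).1 = i₀)).card : ℝ)) :
    C * Real.log n / Real.log (Real.log n / (d - 1 : ℝ)) ≤
      (β : ℝ) * ((2 * β + 1) * d) := by
  have hcount : #{i | (birth i).1 = i₀} ≤ β * ((2 * β + 1) * d) :=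
    calc #{i | (birth i).1 = i₀}
        ≤ β * #(cliqueCycle.cliquesNear i₀ β) :=
          card_born_le_mul_card_of_ball_subset _ birth place β hdist hload (·.1 = i₀) _
            fun _ hu _ huv ↦ cliqueCycle.mem_cliquesNear_of_dist_le hu huv
      _ ≤ β * ((2 * β + 1) * (d - 1)) := by gcongr; exact cliqueCycle.card_cliquesNear_le i₀ β
      _ ≤ β * ((2 * β + 1) * d) := by gcongr; omega
  exact hheavy.trans (by exact_mod_cast hcount)

/-- **Lower bound on sparse graphs via the clique-cycle construction.**
For `2 ≤ d ≤ (log n)/e`, consider the `d`-regular clique cycle on `n = k(d−1)`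
vertices.  Suppose `n` balls are allocated so that every ball is placed within graph
distance `β` of its birthplace and every vertex holds at most `β` balls (`β` is the
maximum load).  If the clique `S` with cycle coordinate `i₀` receives at least
`Φ_S = C·log n / log(log n/(d−1))` balls as birthplaces, then
`Φ_S ≤ β·|B_S^β| ≤ β·(2β+1)·d`. -/
theorem clique_cycle_lower_bound (d k n : ℕ) (hd : 2 ≤ d)
    (hdlog : (d : ℝ) ≤ Real.log n / Real.exp 1)
    (hn : n = k * (d - 1))
    (C : ℝ) (hC : 0 < C)
    (birth place : Fin n → ZMod k × Fin (d - 1)) (β : ℕ)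
    (hdist : ∀ i, (cliqueCycle k (d - 1)).dist (birth i) (place i) ≤ β)
    (hload : ∀ v, (univ.filter (fun i => place i = v)).card ≤ β)
    (i₀ : ZMod k)
    (hheavy : C * Real.log n / Real.log (Real.log n / (d - 1 : ℝ)) ≤
      ((univ.filter (fun i => (birth i).1 = i₀)).card : ℝ)) :
    C * Real.log n / Real.log (Real.log n / (d - 1 : ℝ)) ≤
      (β : ℝ) * ((2 * β + 1) * d) :=
  clique_cycle_lower_bound_general d k n C birth place β hdist hload i₀ hheavy
end
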